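/- arXiv:0910.4089 — 2 statements merged into one kernel-verified Lean document; each statement's English description precedes it below -/
import Mathlib

section
/- Let S be a finite set with |S| = κ ≥ 2 and α > 1. Define, for a configuration η : S → ℕ, a(η) = Π_{x∈S} a(η_x) where a(0)=1, a(n)=n^α. Then there exists a constant A_κ > 0 depending only on α and κ such that for all N ≥ 1, 1 ≤ N^α Σ_{η : Σ_x η_x = N} 1/a(η) ≤ A_κ. -/
noncomputable def aZR (α : ℝ) (n : ℕ) : ℝ := if n = 0 then 1 else (n : ℝ) ^ α

def confs (S : Type*) [Fintype S] [DecidableEq S] (N : ℕ) : Finset (S → ℕ) :=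
  (Fintype.piFinset fun _ => Finset.range (N + 1)).filter (fun η => ∑ x, η x = N)

/-!
Lower bound: putting all `N` particles on one site gives a configuration of weight `N ^ (-α)`.

Upper bound: by pigeonhole every `η` of total mass `N` has a site `y` with `κ η_y ≥ N`, so
`1 / a(η_y) ≤ (κ / N) ^ α`. Emptying site `y` multiplies the weight by `a(η_y)` (as `a 0 = 1`)
and is injective on configurations of total mass `N`, since `η_y` is recovered from the total.
Summing over `y`, `N ^ α ∑_η 1 / a(η) ≤ κ ^ α · κ · (∑_m 1 / a m) ^ κ`, finite because `α > 1`.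
-/

open Finset Function

@[to_additive]
theorem Fintype.prod_comp_eq_mul_prod_comp_update {ι β M : Type*} [Fintype ι] [DecidableEq ι]
    [CommMonoid M] (g : β → M) (f : ι → β) (i : ι) {b : β} (hb : g b = 1) :
    ∏ x, g (f x) = g (f i) * ∏ x, g (update f i b x) := by
  simp_rw [apply_update (fun _ => g), Finset.prod_update_of_mem (mem_univ i), hb, one_mul,
    Fintype.prod_eq_mul_prod_compl i (fun x => g (f x)), compl_eq_univ_sdiff]

theorem Fintype.exists_le_card_mul_of_sum_eq {ι : Type*} [Fintype ι] [Nonempty ι]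
    {η : ι → ℕ} {N : ℕ} (hη : ∑ x, η x = N) : ∃ y, N ≤ Fintype.card ι * η y := by
  obtain ⟨y, -, hy⟩ := Finset.exists_le_of_sum_le (f := fun _ => N)
    (g := fun x => Fintype.card ι * η x) univ_nonempty
    (by rw [sum_const, card_univ, smul_eq_mul, ← mul_sum, hη, mul_comm])
  exact ⟨y, hy⟩

section Configurations

variable {S : Type*} [Fintype S] [DecidableEq S] {N : ℕ}

theorem mem_confs {η : S → ℕ} : η ∈ confs S N ↔ ∑ x, η x = N := by
  refine ⟨fun h => (mem_filter.mp h).2, fun h => mem_filter.mpr ⟨?_, h⟩⟩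
  rw [Fintype.mem_piFinset]
  intro x
  exact mem_range.mpr (Nat.lt_succ_of_le (h ▸ single_le_sum (by simp) (mem_univ x)))

theorem update_zero_mem_piFinset_of_mem_confs {η : S → ℕ} (hη : η ∈ confs S N) (y : S) :
    update η y 0 ∈ Fintype.piFinset fun _ => range (N + 1) := by
  rw [Fintype.mem_piFinset]
  intro x
  rcases eq_or_ne x y with rfl | hxy
  · simp
  · rw [update_of_ne hxy]
    exact Fintype.mem_piFinset.mp (mem_filter.mp hη).1 x

theorem injOn_update_zero_confs (y : S) :
    Set.InjOn (fun η : S → ℕ => update η y 0) (confs S N) := by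
  intro η hη η' hη' h
  simp only at h
  have hy : η y = η' y := by
    have e := Fintype.sum_comp_eq_add_sum_comp_update id η y rfl
    have e' := Fintype.sum_comp_eq_add_sum_comp_update id η' y rfl
    simp only [id, mem_confs.mp hη, mem_confs.mp hη', h] at e e'
    omega
  funext x
  rcases eq_or_ne x y with rfl | hxy
  · exact hy
  · simpa [hxy] using congrFun h x

end Configurations

theorem aZR_pos (α : ℝ) (n : ℕ) : 0 < aZR α n := by
  unfold aZR; split <;> positivity

theorem one_div_aZR_nonneg (α : ℝ) (n : ℕ) : 0 ≤ 1 / aZR α n :=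
  (one_div_pos.mpr (aZR_pos α n)).le

theorem one_div_aZR_le_of_le_mul {α : ℝ} (hα : 0 ≤ α) {c n N : ℕ} (hN : 0 < N)
    (h : N ≤ c * n) : 1 / aZR α n ≤ (c : ℝ) ^ α / (N : ℝ) ^ α := by
  have hn : n ≠ 0 := by rintro rfl; omega
  have hnR : (0 : ℝ) < n := by positivity
  rw [aZR, if_neg hn, div_le_div_iff₀ (by positivity) (by positivity), one_mul,
    ← Real.mul_rpow (by positivity) hnR.le]
  exact Real.rpow_le_rpow (by positivity) (by exact_mod_cast h) hα

theorem summable_one_div_aZR {α : ℝ} (hα : 1 < α) : Summable fun n => 1 / aZR α n := by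
  rw [← summable_nat_add_iff 1]
  refine ((summable_nat_add_iff 1).mpr (Real.summable_one_div_nat_rpow.mpr hα)).congr ?_
  intro n
  simp [aZR]

noncomputable def confWeight {S : Type*} [Fintype S] (α : ℝ) (η : S → ℕ) : ℝ :=
  ∏ x, 1 / aZR α (η x)

theorem confWeight_nonneg {S : Type*} [Fintype S] {α : ℝ} (η : S → ℕ) : 0 ≤ confWeight α η :=
  prod_nonneg fun x _ => one_div_aZR_nonneg α (η x)

section Weights

variable {S : Type*} [Fintype S] [DecidableEq S] {α : ℝ} {N : ℕ}

theorem confWeight_single (x₀ : S) (hN : N ≠ 0) :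
    confWeight α (Pi.single x₀ N) = 1 / (N : ℝ) ^ α := by
  rw [confWeight, Fintype.prod_eq_single x₀ fun x hx => by simp [hx, aZR]]
  simp [aZR, hN]

theorem sum_piFinset_confWeight (N : ℕ) :
    ∑ θ ∈ Fintype.piFinset (fun _ : S => range (N + 1)), confWeight α θ
      = (∑ m ∈ range (N + 1), 1 / aZR α m) ^ Fintype.card S := by
  rw [← card_univ, ← prod_const]
  exact (prod_univ_sum (fun _ => range (N + 1)) fun _ m => 1 / aZR α m).symm

theorem confWeight_le_sum_confWeight_update [Nonempty S] (hα : 0 ≤ α) (hN : 0 < N)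
    {η : S → ℕ} (hη : η ∈ confs S N) :
    confWeight α η ≤
      (Fintype.card S : ℝ) ^ α / (N : ℝ) ^ α * ∑ y, confWeight α (update η y 0) := by
  obtain ⟨y, hy⟩ := Fintype.exists_le_card_mul_of_sum_eq (mem_confs.mp hη)
  calc confWeight α η = 1 / aZR α (η y) * confWeight α (update η y 0) :=
        Fintype.prod_comp_eq_mul_prod_comp_update (fun n => 1 / aZR α n) η y (by simp [aZR])
    _ ≤ (Fintype.card S : ℝ) ^ α / (N : ℝ) ^ α * confWeight α (update η y 0) :=
        mul_le_mul_of_nonneg_right (one_div_aZR_le_of_le_mul hα hN hy) (confWeight_nonneg _)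
    _ ≤ _ := by
        gcongr
        exact single_le_sum (f := fun y => confWeight α (update η y 0))
          (fun y _ => confWeight_nonneg _) (mem_univ y)

theorem sum_confs_confWeight_update_le (hα : 1 < α) (y : S) :
    ∑ η ∈ confs S N, confWeight α (update η y 0)
      ≤ (∑' m, 1 / aZR α m) ^ Fintype.card S :=
  calc ∑ η ∈ confs S N, confWeight α (update η y 0)
      = ∑ θ ∈ (confs S N).image (update · y 0), confWeight α θ :=
        (sum_image (injOn_update_zero_confs y)).symm
    _ ≤ ∑ θ ∈ Fintype.piFinset (fun _ : S => range (N + 1)), confWeight α θ :=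
        sum_le_sum_of_subset_of_nonneg
          (image_subset_iff.mpr fun η hη => update_zero_mem_piFinset_of_mem_confs hη y)
          (fun θ _ _ => confWeight_nonneg θ)
    _ ≤ (∑' m, 1 / aZR α m) ^ Fintype.card S := by
        rw [sum_piFinset_confWeight]
        gcongr
        · exact sum_nonneg fun m _ => one_div_aZR_nonneg α m
        · exact (summable_one_div_aZR hα).sum_le_tsum _ fun m _ => one_div_aZR_nonneg α m

theorem one_le_rpow_mul_sum_confs_confWeight [Nonempty S] (hN : N ≠ 0) :
    1 ≤ (N : ℝ) ^ α * ∑ η ∈ confs S N, confWeight α η := by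
  obtain ⟨x₀⟩ := ‹Nonempty S›
  calc (1 : ℝ) = (N : ℝ) ^ α * confWeight α (Pi.single x₀ N) := by
        rw [confWeight_single x₀ hN]
        field_simp
    _ ≤ _ := by
        gcongr
        exact single_le_sum (fun η _ => confWeight_nonneg η) (mem_confs.mpr (by simp))

theorem rpow_mul_sum_confs_confWeight_le [Nonempty S] (hα : 1 < α) (hN : 0 < N) :
    (N : ℝ) ^ α * ∑ η ∈ confs S N, confWeight α η ≤
      (Fintype.card S : ℝ) ^ α * (Fintype.card S * (∑' m, 1 / aZR α m) ^ Fintype.card S) :=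
  calc (N : ℝ) ^ α * ∑ η ∈ confs S N, confWeight α η
      ≤ (N : ℝ) ^ α * ∑ η ∈ confs S N, (Fintype.card S : ℝ) ^ α / (N : ℝ) ^ α *
          ∑ y, confWeight α (update η y 0) := by
        gcongr with η hη
        exact confWeight_le_sum_confWeight_update (by linarith) hN hη
    _ = (Fintype.card S : ℝ) ^ α * ∑ y, ∑ η ∈ confs S N, confWeight α (update η y 0) := by
        rw [← mul_sum, sum_comm, ← mul_assoc, mul_div_cancel₀ _ (by positivity)]
    _ ≤ _ := by
        gcongr
        exact (sum_le_card_nsmul univ _ _ fun y _ => sum_confs_confWeight_update_le hα y).trans_eq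
          (by simp)

end Weights

theorem partition_function_bounded (S : Type*) [Fintype S] [DecidableEq S]
    (hκ : 2 ≤ Fintype.card S) (α : ℝ) (hα : 1 < α) :
    ∃ A : ℝ, 0 < A ∧ ∀ N : ℕ, 1 ≤ N →
      1 ≤ (N : ℝ) ^ α * ∑ η ∈ confs S N, ∏ x, 1 / aZR α (η x) ∧
      (N : ℝ) ^ α * ∑ η ∈ confs S N, ∏ x, 1 / aZR α (η x) ≤ A := by
  have : Nonempty S := Fintype.card_pos_iff.mp (by omega)
  have hZ : 0 < ∑' m, 1 / aZR α m :=
    (summable_one_div_aZR hα).tsum_pos (one_div_aZR_nonneg α) 0 (by simp [aZR])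
  exact ⟨(Fintype.card S : ℝ) ^ α * (Fintype.card S * (∑' m, 1 / aZR α m) ^ Fintype.card S),
    by positivity, fun N hN => ⟨one_le_rpow_mul_sum_confs_confWeight (by omega),
      rpow_mul_sum_confs_confWeight_le hα hN⟩⟩
end

section
/- For α > 1, I_α := ∫₀¹ u^α (1−u)^α du is finite and strictly positive, and for each fixed integer k ≥ 0 and sequence ℓ_N with ℓ_N → ∞ and ℓ_N/N → 0, one has N^{1+2α} · [ Σ_{i=ℓ_N−k}^{N−ℓ_N−1} a(i) a(N−1−k−i) ]^{−1} → 1/I_α as N → ∞, where a(0)=1, a(n)=n^α. -/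
/-!
Writing `F_N(i) = a(i) a(N-1-k-i) / N^{2α}` on the summation window and `0` elsewhere, the
normalised sum `S_N / N^{1+2α}` of the theorem is the Riemann sum `(∑_{i<N} F_N(i)) / N = ∫₀¹ F_N(⌊N u⌋) du`.
The step functions are bounded by `1`, and for each `u ∈ (0,1)` the index `⌊N u⌋` eventually lies
inside the window (because `ℓ_N / N → 0`), where `F_N(⌊N u⌋) → u^α (1-u)^α`. Dominated convergence
gives `S_N / N^{1+2α} → I_α`, and `I_α > 0` because its integrand is positive on `(0,1)`.
-/

open Filter Finset MeasureTheory Topology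

theorem eqOn_comp_natFloor_Ico (f : ℕ → ℝ) (i : ℕ) :
    Set.EqOn (fun x : ℝ ↦ f ⌊x⌋₊) (fun _ ↦ f i) (Set.Ico (i : ℝ) (i + 1)) :=
  fun x hx ↦ congrArg f (Nat.floor_eq_on_Ico i x hx)

theorem intervalIntegral_comp_natFloor (f : ℕ → ℝ) (i : ℕ) :
    ∫ x in (i : ℝ)..(i + 1 : ℕ), f ⌊x⌋₊ = f i := by
  rw [intervalIntegral.integral_of_le (by simp), integral_Ioc_eq_integral_Ioo,
    ← integral_Ico_eq_integral_Ioo, Nat.cast_succ,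
    setIntegral_congr_fun measurableSet_Ico (eqOn_comp_natFloor_Ico f i)]
  simp

theorem intervalIntegrable_comp_natFloor (f : ℕ → ℝ) (i : ℕ) :
    IntervalIntegrable (fun x : ℝ ↦ f ⌊x⌋₊) volume i (i + 1 : ℕ) := by
  rw [intervalIntegrable_iff_integrableOn_Ico_of_le (by simp), Nat.cast_succ]
  exact (integrableOn_const measure_Ico_lt_top.ne).congr_fun
    (eqOn_comp_natFloor_Ico f i).symm measurableSet_Ico

theorem intervalIntegral_comp_natFloor_mul (f : ℕ → ℝ) {N : ℕ} (hN : N ≠ 0) :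
    ∫ u in (0 : ℝ)..1, f ⌊(N : ℝ) * u⌋₊ = (∑ i ∈ range N, f i) / N := by
  rw [intervalIntegral.integral_comp_mul_left (fun x ↦ f ⌊x⌋₊) (Nat.cast_ne_zero.2 hN),
    mul_zero, mul_one, smul_eq_mul, inv_mul_eq_div]
  congr 1
  have hsplit := intervalIntegral.sum_integral_adjacent_intervals (a := fun i : ℕ ↦ (i : ℝ))
    (n := N) fun i _ ↦ intervalIntegrable_comp_natFloor f i
  simpa only [intervalIntegral_comp_natFloor, Nat.cast_zero] using hsplit.symm

theorem tendsto_sum_range_div_of_tendsto_comp_natFloor {F : ℕ → ℕ → ℝ} {g : ℝ → ℝ} {C : ℝ}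
    (hF : ∀ᶠ N in atTop, ∀ i ≤ N, ‖F N i‖ ≤ C)
    (hg : ∀ u ∈ Set.Ioo (0 : ℝ) 1, Tendsto (fun N : ℕ ↦ F N ⌊(N : ℝ) * u⌋₊) atTop (𝓝 (g u))) :
    Tendsto (fun N : ℕ ↦ (∑ i ∈ range N, F N i) / N) atTop (𝓝 (∫ u in (0 : ℝ)..1, g u)) := by
  have hRiemann : (fun N : ℕ ↦ ∫ u in (0 : ℝ)..1, F N ⌊(N : ℝ) * u⌋₊)
      =ᶠ[atTop] fun N ↦ (∑ i ∈ range N, F N i) / N := by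
    filter_upwards [eventually_ne_atTop 0] with N hN
    exact intervalIntegral_comp_natFloor_mul (F N) hN
  refine (intervalIntegral.tendsto_integral_filter_of_dominated_convergence (fun _ ↦ C)
    (Eventually.of_forall fun N ↦ ?_) ?_ intervalIntegrable_const ?_).congr' hRiemann
  · exact (measurable_from_nat.comp (measurable_const_mul _).nat_floor).aestronglyMeasurable
  · filter_upwards [hF] with N hN
    refine ae_of_all _ fun u hu ↦ hN _ (Nat.floor_le_of_le ?_)
    rw [Set.uIoc_of_le zero_le_one] at hu
    exact mul_le_of_le_one_right N.cast_nonneg hu.2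
  · filter_upwards [Measure.ae_ne volume 1] with u hu1 hu
    rw [Set.uIoc_of_le zero_le_one] at hu
    exact hg u ⟨hu.1, lt_of_le_of_ne hu.2 hu1⟩

theorem tendsto_natFloor_mul_div_natCast {u : ℝ} (hu : 0 ≤ u) :
    Tendsto (fun N : ℕ ↦ (⌊(N : ℝ) * u⌋₊ : ℝ) / N) atTop (𝓝 u) := by
  simpa only [mul_comm _ u, Function.comp_def] using
    (tendsto_nat_floor_mul_div_atTop hu).comp tendsto_natCast_atTop_atTop

theorem eventually_lt_and_add_lt_of_tendsto_div {j ℓ : ℕ → ℕ} {u : ℝ} (hu : u ∈ Set.Ioo 0 1)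
    (hj : Tendsto (fun N : ℕ ↦ (j N : ℝ) / N) atTop (𝓝 u))
    (hℓ : Tendsto (fun N : ℕ ↦ (ℓ N : ℝ) / N) atTop (𝓝 0)) (c : ℕ) :
    ∀ᶠ N in atTop, ℓ N < j N ∧ j N + ℓ N + c < N := by
  have hlow : Tendsto (fun N : ℕ ↦ ((j N : ℝ) - ℓ N) / N) atTop (𝓝 (u - 0)) := by
    simpa only [sub_div] using hj.sub hℓ
  have hhigh : Tendsto (fun N : ℕ ↦ ((j N : ℝ) + ℓ N + c) / N) atTop (𝓝 (u + 0 + 0)) := by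
    simpa only [add_div] using (hj.add hℓ).add (tendsto_const_div_atTop_nhds_zero_nat (c : ℝ))
  rw [sub_zero] at hlow
  rw [add_zero, add_zero] at hhigh
  filter_upwards [hlow.eventually (lt_mem_nhds hu.1), hhigh.eventually (gt_mem_nhds hu.2),
    eventually_gt_atTop 0] with N hN_low hN_high hN
  have hN' : (0 : ℝ) < N := Nat.cast_pos.2 hN
  rw [div_pos_iff_of_pos_right hN', sub_pos] at hN_low
  rw [div_lt_one hN'] at hN_high
  exact ⟨mod_cast hN_low, mod_cast hN_high⟩

theorem aZR_nonneg (α : ℝ) (n : ℕ) : 0 ≤ aZR α n := by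
  unfold aZR; split_ifs <;> positivity

theorem aZR_of_ne_zero (α : ℝ) {n : ℕ} (hn : n ≠ 0) : aZR α n = (n : ℝ) ^ α := if_neg hn

theorem aZR_le_rpow {α : ℝ} (hα : 0 ≤ α) {n N : ℕ} (hn : n ≤ N) (hN : N ≠ 0) :
    aZR α n ≤ (N : ℝ) ^ α := by
  unfold aZR
  split_ifs
  · exact Real.one_le_rpow (Nat.one_le_cast.2 (Nat.one_le_iff_ne_zero.2 hN)) hα
  · exact Real.rpow_le_rpow n.cast_nonneg (Nat.cast_le.2 hn) hα

noncomputable def windowTerm (α : ℝ) (k L N i : ℕ) : ℝ :=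
  if i ∈ Icc (L - k) (N - L - 1) then aZR α i * aZR α (N - 1 - k - i) / (N : ℝ) ^ (2 * α) else 0

section windowTerm

variable {α : ℝ} {k L N : ℕ}

theorem norm_windowTerm_le_one (hα : 0 ≤ α) (hN : N ≠ 0) (i : ℕ) :
    ‖windowTerm α k L N i‖ ≤ 1 := by
  unfold windowTerm
  split_ifs with hi
  · rw [mem_Icc] at hi
    have hN' : (0 : ℝ) < N := Nat.cast_pos.2 (Nat.pos_of_ne_zero hN)
    have hprod := mul_nonneg (aZR_nonneg α i) (aZR_nonneg α (N - 1 - k - i))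
    rw [Real.norm_of_nonneg (by positivity), div_le_one (by positivity), two_mul,
      Real.rpow_add hN']
    exact mul_le_mul (aZR_le_rpow hα (by omega) hN) (aZR_le_rpow hα (by omega) hN)
      (aZR_nonneg _ _) (by positivity)
  · simp

theorem sum_range_windowTerm (hN : N ≠ 0) :
    ∑ i ∈ range N, windowTerm α k L N i =
      (∑ i ∈ Icc (L - k) (N - L - 1), aZR α i * aZR α (N - 1 - k - i)) / (N : ℝ) ^ (2 * α) := by
  have hwindow : Icc (L - k) (N - L - 1) ⊆ range N := fun i hi ↦ by
    rw [mem_Icc] at hi; rw [mem_range]; omega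
  rw [sum_div, ← inter_eq_right.2 hwindow, ← sum_ite_mem]
  rfl

theorem windowTerm_eq_rpow_mul_rpow {i : ℕ} (hi : L < i) (hiN : i + L + (k + 1) < N) :
    windowTerm α k L N i = ((i : ℝ) / N) ^ α * (((N - 1 - k - i : ℕ) : ℝ) / N) ^ α := by
  have hN' : (0 : ℝ) < N := Nat.cast_pos.2 (by omega)
  rw [windowTerm, if_pos (mem_Icc.2 ⟨by omega, by omega⟩), aZR_of_ne_zero α (by omega),
    aZR_of_ne_zero α (by omega), Real.div_rpow (by positivity) hN'.le,
    Real.div_rpow (by positivity) hN'.le, div_mul_div_comm, two_mul, Real.rpow_add hN']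

end windowTerm

theorem tendsto_windowTerm_natFloor_mul {α : ℝ} {k : ℕ} {ℓ : ℕ → ℕ}
    (hℓ : Tendsto (fun N : ℕ ↦ (ℓ N : ℝ) / N) atTop (𝓝 0)) {u : ℝ} (hu : u ∈ Set.Ioo 0 1) :
    Tendsto (fun N : ℕ ↦ windowTerm α k (ℓ N) N ⌊(N : ℝ) * u⌋₊) atTop
      (𝓝 (u ^ α * (1 - u) ^ α)) := by
  set j : ℕ → ℕ := fun N ↦ ⌊(N : ℝ) * u⌋₊
  have hj : Tendsto (fun N : ℕ ↦ (j N : ℝ) / N) atTop (𝓝 u) :=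
    tendsto_natFloor_mul_div_natCast hu.1.le
  have hwindow := eventually_lt_and_add_lt_of_tendsto_div hu hj hℓ (k + 1)
  have hcompl : Tendsto (fun N : ℕ ↦ ((N - 1 - k - j N : ℕ) : ℝ) / N) atTop (𝓝 (1 - u)) := by
    have hlim : Tendsto (fun N : ℕ ↦ 1 - (j N : ℝ) / N - ((k + 1 : ℕ) : ℝ) / N) atTop
        (𝓝 (1 - u - 0)) :=
      (tendsto_const_nhds.sub hj).sub (tendsto_const_div_atTop_nhds_zero_nat _)
    rw [sub_zero] at hlim
    refine hlim.congr' ?_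
    filter_upwards [hwindow] with N hN
    have hN' : (N : ℝ) ≠ 0 := Nat.cast_ne_zero.2 (by omega)
    rw [show N - 1 - k - j N = N - j N - (k + 1) by omega, Nat.cast_sub (by omega),
      Nat.cast_sub (by omega)]
    field_simp
  refine ((hj.rpow_const (Or.inl hu.1.ne')).mul
    (hcompl.rpow_const (Or.inl (sub_pos.2 hu.2).ne'))).congr' ?_
  filter_upwards [hwindow] with N hN
  exact (windowTerm_eq_rpow_mul_rpow hN.1 hN.2).symm

theorem tendsto_sum_aZR_mul_div_rpow {α : ℝ} (hα : 0 ≤ α) (k : ℕ) {ℓ : ℕ → ℕ}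
    (hℓ : Tendsto (fun N : ℕ ↦ (ℓ N : ℝ) / N) atTop (𝓝 0)) :
    Tendsto (fun N : ℕ ↦ (∑ i ∈ Icc (ℓ N - k) (N - ℓ N - 1), aZR α i * aZR α (N - 1 - k - i)) /
      (N : ℝ) ^ (1 + 2 * α)) atTop (𝓝 (∫ u in (0 : ℝ)..1, u ^ α * (1 - u) ^ α)) := by
  refine (tendsto_sum_range_div_of_tendsto_comp_natFloor (C := 1)
    (F := fun N ↦ windowTerm α k (ℓ N) N) ?_
    fun u hu ↦ tendsto_windowTerm_natFloor_mul hℓ hu).congr' ?_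
  · filter_upwards [eventually_ne_atTop 0] with N hN i _
    exact norm_windowTerm_le_one hα hN i
  · filter_upwards [eventually_ne_atTop 0] with N hN
    rw [sum_range_windowTerm hN, div_div, Real.rpow_add (Nat.cast_pos.2 (Nat.pos_of_ne_zero hN)),
      Real.rpow_one, mul_comm]

theorem integral_rpow_mul_one_sub_rpow_pos {α : ℝ} (hα : 0 ≤ α) :
    0 < ∫ u in (0 : ℝ)..1, u ^ α * (1 - u) ^ α := by
  have hcont : Continuous fun u : ℝ ↦ u ^ α * (1 - u) ^ α :=
    (Real.continuous_rpow_const hα).mul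
      ((Real.continuous_rpow_const hα).comp (continuous_sub_left 1))
  refine intervalIntegral.intervalIntegral_pos_of_pos_on (hcont.intervalIntegrable 0 1)
    (fun u hu ↦ ?_) zero_lt_one
  have hu' := sub_pos.2 hu.2
  have hu0 := hu.1
  positivity

theorem Ialpha_and_sum_asymptotics_general (α : ℝ) (hα : 1 < α)
    (Iα : ℝ) (hIα : Iα = ∫ u in (0:ℝ)..1, u ^ α * (1 - u) ^ α)
    (k : ℕ) (ℓ : ℕ → ℕ)
    (hℓN : Filter.Tendsto (fun N : ℕ => (ℓ N : ℝ) / (N : ℝ)) Filter.atTop (nhds 0)) :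
    0 < Iα ∧
      Filter.Tendsto
        (fun N : ℕ => (N : ℝ) ^ ((1 : ℝ) + 2 * α) *
          (∑ i ∈ Finset.Icc (ℓ N - k) (N - ℓ N - 1),
            aZR α i * aZR α (N - 1 - k - i))⁻¹)
        Filter.atTop (nhds (1 / Iα)) := by
  have hα0 : 0 ≤ α := zero_le_one.trans hα.le
  have hIpos : 0 < Iα := hIα ▸ integral_rpow_mul_one_sub_rpow_pos hα0
  refine ⟨hIpos, ?_⟩
  have hlim := (hIα ▸ tendsto_sum_aZR_mul_div_rpow hα0 k hℓN).inv₀ hIpos.ne'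
  simpa only [div_eq_mul_inv, mul_inv_rev, inv_inv, one_mul] using hlim

theorem Ialpha_and_sum_asymptotics (α : ℝ) (hα : 1 < α)
    (Iα : ℝ) (hIα : Iα = ∫ u in (0:ℝ)..1, u ^ α * (1 - u) ^ α)
    (k : ℕ) (ℓ : ℕ → ℕ)
    (hℓ : Filter.Tendsto ℓ Filter.atTop Filter.atTop)
    (hℓN : Filter.Tendsto (fun N : ℕ => (ℓ N : ℝ) / (N : ℝ)) Filter.atTop (nhds 0)) :
    0 < Iα ∧
      Filter.Tendsto
        (fun N : ℕ => (N : ℝ) ^ ((1 : ℝ) + 2 * α) *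
          (∑ i ∈ Finset.Icc (ℓ N - k) (N - ℓ N - 1),
            aZR α i * aZR α (N - 1 - k - i))⁻¹)
        Filter.atTop (nhds (1 / Iα)) :=
  Ialpha_and_sum_asymptotics_general α hα Iα hIα k ℓ hℓN
end
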